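/- arXiv:2307.02817 — 7 statements merged into one kernel-verified Lean document; each statement's English description precedes it below -/
import Mathlib

section
/- Let L be a complete lattice, i, p ∈ L, and f ⊣ g an adjunction with f, g : L → L monotone (f(x) ⊑ y iff x ⊑ g(y)). Then μ(λx. f(x) ⊔ i) ⊑ p if and only if i ⊑ ν(λy. g(y) ⊓ p). -/
theorem stmt_2 {L : Type*} [CompleteLattice L] (f g : L → L)
    (hf : Monotone f) (hg : Monotone g)
    (hadj : ∀ x y : L, f x ≤ y ↔ x ≤ g y) (i p : L) :
    OrderHom.lfp ⟨fun x => f x ⊔ i, fun a b hab => sup_le_sup (hf hab) le_rfl⟩ ≤ p ↔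
      i ≤ OrderHom.gfp ⟨fun y => g y ⊓ p, fun a b hab => inf_le_inf (hg hab) le_rfl⟩ := by
  set F : L →o L := ⟨fun x => f x ⊔ i, fun a b hab => sup_le_sup (hf hab) le_rfl⟩
  set G : L →o L := ⟨fun y => g y ⊓ p, fun a b hab => inf_le_inf (hg hab) le_rfl⟩
  constructor
  · intro h
    set a := OrderHom.lfp F with ha
    have hfix : f a ⊔ i = a := OrderHom.map_lfp F
    have hia : i ≤ a := le_sup_right.trans hfix.le
    have hfa : f a ≤ a := le_sup_left.trans hfix.le
    have hag : a ≤ G a := le_inf ((hadj a a).mp hfa) h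
    exact hia.trans (OrderHom.le_gfp G hag)
  · intro h
    set b := OrderHom.gfp G with hb
    have hfix : g b ⊓ p = b := OrderHom.map_gfp G
    have hbp : b ≤ p := hfix.ge.trans inf_le_right
    have hbg : b ≤ g b := hfix.ge.trans inf_le_left
    have hFb : F b ≤ b := sup_le ((hadj b b).mpr hbg) h
    exact (OrderHom.lfp_le F hFb).trans hbp
end

section
/- Let L be a complete lattice, p ∈ L, and g : L → L a map preserving all meets. Then ν(λy. g(y) ⊓ p) = ⨅_{n ∈ ℕ} g^n(p). -/
theorem stmt_6 {L : Type*} [CompleteLattice L] (g : L → L)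
    (hg : ∀ s : Set L, g (sInf s) = sInf (g '' s)) (p : L) :
    sSup {y : L | y ≤ g y ⊓ p} = ⨅ n : ℕ, g^[n] p := by
  have hmono : Monotone g := by
    intro x y hxy
    have h1 : sInf {x, y} = x := by
      simp [sInf_insert, inf_eq_left.mpr hxy]
    have h2 := hg {x, y}
    rw [h1] at h2
    rw [h2]
    simp only [Set.image_insert_eq, Set.image_singleton, sInf_insert, sInf_singleton]
    exact inf_le_right
  apply le_antisymm
  · apply sSup_le
    intro y hy
    have hyp : y ≤ p := hy.trans inf_le_right
    have hyg : y ≤ g y := hy.trans inf_le_left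
    apply le_iInf
    intro n
    induction n with
    | zero => simpa using hyp
    | succ n ih =>
      rw [Function.iterate_succ_apply']
      exact hyg.trans (hmono ih)
  · apply le_sSup
    show (⨅ n : ℕ, g^[n] p) ≤ g (⨅ n : ℕ, g^[n] p) ⊓ p
    refine le_inf ?_ (iInf_le _ 0)
    have : g (⨅ n : ℕ, g^[n] p) = ⨅ n : ℕ, g (g^[n] p) := by
      rw [iInf, hg, ← Set.range_comp, iInf]
      rfl
    rw [this]
    apply le_iInf
    intro n
    exact (iInf_le _ (n + 1)).trans_eq (Function.iterate_succ_apply' g n p)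
end

section
/- Let S be a set, I ⊆ S, δ : S → Set S, and P ⊆ S. With F(X) = ⋃_{s ∈ X} δ(s) and G(X) = {s | δ(s) ⊆ X}, the least fixed point μ(λX. F(X) ∪ I) is contained in P if and only if I is contained in the greatest fixed point ν(λX. G(X) ∩ P). -/
theorem stmt_8 {S : Type*} (δ : S → Set S) (I P : Set S) :
    OrderHom.lfp ⟨fun X : Set S => (⋃ s ∈ X, δ s) ∪ I,
        fun X Y h => Set.union_subset_union (Set.biUnion_subset_biUnion_left h) le_rfl⟩ ⊆ P ↔
      I ⊆ OrderHom.gfp ⟨fun X : Set S => {s | δ s ⊆ X} ∩ P,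
        fun X Y h => Set.inter_subset_inter (fun s hs => hs.trans h) le_rfl⟩ := by
  set f : Set S →o Set S := ⟨fun X : Set S => (⋃ s ∈ X, δ s) ∪ I,
        fun X Y h => Set.union_subset_union (Set.biUnion_subset_biUnion_left h) le_rfl⟩
  set g : Set S →o Set S := ⟨fun X : Set S => {s | δ s ⊆ X} ∩ P,
        fun X Y h => Set.inter_subset_inter (fun s hs => hs.trans h) le_rfl⟩
  have hμ : f (OrderHom.lfp f) = OrderHom.lfp f := OrderHom.map_lfp f
  have hν : g (OrderHom.gfp g) = OrderHom.gfp g := OrderHom.map_gfp g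
  constructor
  · intro h
    have hpost : OrderHom.lfp f ≤ g (OrderHom.lfp f) := by
      intro s hs
      refine ⟨fun t ht => ?_, h hs⟩
      have : t ∈ f (OrderHom.lfp f) := Or.inl (Set.mem_biUnion hs ht)
      rwa [hμ] at this
    have hμν : OrderHom.lfp f ≤ OrderHom.gfp g := g.le_gfp hpost
    have hI : I ≤ OrderHom.lfp f := by
      intro s hs
      have : s ∈ f (OrderHom.lfp f) := Or.inr hs
      rwa [hμ] at this
    exact hI.trans hμν
  · intro h
    have hpre : f (OrderHom.gfp g) ≤ OrderHom.gfp g := by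
      intro s hs
      rcases hs with hs | hs
      · rcases Set.mem_iUnion₂.1 hs with ⟨t, ht, hst⟩
        have : t ∈ g (OrderHom.gfp g) := by rw [hν]; exact ht
        exact this.1 hst
      · exact h hs
    have hμν : OrderHom.lfp f ≤ OrderHom.gfp g := f.lfp_le hpre
    intro s hs
    have : s ∈ g (OrderHom.gfp g) := by rw [hν]; exact hμν hs
    exact this.2
end

section
/- Let L be a complete lattice, b : L → L a map preserving suprema of ω-chains (ω-continuous and monotone), and p ∈ L. Then μb ⊑ p in L if and only if μ(λX. b↓(X) ∪ ⊥↓) ⊆ p↓ in the lattice of lower sets of L. -/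
theorem stmt_13 {L : Type*} [CompleteLattice L] (b : L → L) (hb : Monotone b)
    (hcont : ∀ c : ℕ →o L, b (⨆ n, c n) = ⨆ n, b (c n)) (p : L) :
    OrderHom.lfp ⟨b, hb⟩ ≤ p ↔
      OrderHom.lfp
        ⟨fun X : Set L => (lowerClosure (b '' X) : Set L) ∪ Set.Iic (⊥ : L),
          fun X Y h => Set.union_subset_union
            (fun a ha => by
              obtain ⟨c, hc, hac⟩ := mem_lowerClosure.mp ha
              exact mem_lowerClosure.mpr ⟨c, Set.image_mono h hc, hac⟩)
            le_rfl⟩ ⊆ Set.Iic p := by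
  set f : L →o L := ⟨b, hb⟩ with hf
  set F : Set L →o Set L :=
    ⟨fun X : Set L => (lowerClosure (b '' X) : Set L) ∪ Set.Iic (⊥ : L),
      fun X Y h => Set.union_subset_union
        (fun a ha => by
          obtain ⟨c, hc, hac⟩ := mem_lowerClosure.mp ha
          exact mem_lowerClosure.mpr ⟨c, Set.image_mono h hc, hac⟩)
        le_rfl⟩ with hFdef
  constructor
  · intro hp
    have h1 : F.lfp ≤ Set.Iic (OrderHom.lfp f) := by
      apply OrderHom.lfp_le
      intro x hx
      rcases hx with hx | hx
      · obtain ⟨c, hc, hxc⟩ := mem_lowerClosure.mp hx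
        obtain ⟨d, hd, rfl⟩ := hc
        have : b d ≤ b (OrderHom.lfp f) := hb hd
        calc x ≤ b d := hxc
          _ ≤ b (OrderHom.lfp f) := hb hd
          _ = OrderHom.lfp f := f.map_lfp
      · exact le_trans hx bot_le
    exact fun x hx => le_trans (h1 hx) hp
  · intro hp
    -- each Kleene iterate is in lfp F
    have hmem : ∀ n : ℕ, b^[n] ⊥ ∈ F.lfp := by
      intro n
      induction n with
      | zero =>
        have := F.map_lfp
        rw [← this]
        exact Or.inr (le_refl ⊥)
      | succ n ih =>
        have := F.map_lfp
        rw [← this, Function.iterate_succ_apply']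
        exact Or.inl (mem_lowerClosure.mpr ⟨b (b^[n] ⊥), ⟨_, ih, rfl⟩, le_rfl⟩)
    have hle : ∀ n, b^[n] ⊥ ≤ p := fun n => hp (hmem n)
    -- the chain
    have hmono : Monotone fun n : ℕ => b^[n] (⊥ : L) := by
      apply monotone_nat_of_le_succ
      intro n
      induction n with
      | zero => exact bot_le
      | succ n ih =>
        rw [Function.iterate_succ_apply', Function.iterate_succ_apply']
        exact hb ih
    set c : ℕ →o L := ⟨fun n => b^[n] ⊥, hmono⟩ with hc
    have hsup : b (⨆ n, c n) ≤ ⨆ n, c n := by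
      rw [hcont c]
      apply iSup_le
      intro n
      have : b (c n) = c (n + 1) := (Function.iterate_succ_apply' b n ⊥).symm
      rw [this]
      exact le_iSup (fun n => c n) (n + 1)
    have hlfp : OrderHom.lfp f ≤ ⨆ n, c n := OrderHom.lfp_le f hsup
    exact le_trans hlfp (iSup_le fun n => hle n)
end

section
/- Let L be a complete lattice with i, p ∈ L and f ⊣ g : L → L. Suppose x₀ ⊑ x₁ ⊑ … ⊑ x_{n−1} is a finite chain of length n ≥ 2 satisfying: i ⊑ x₁, x_{n−2} ⊑ p, and f(x_j) ⊑ x_{j+1} for all j ≤ n−2. If additionally x_{j+1} ⊑ x_j for some j ≤ n−2, then μ(λx. f(x) ⊔ i) ⊑ p. -/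
theorem stmt_14 {L : Type*} [CompleteLattice L] (f g : L → L)
    (hf : Monotone f) (hg : Monotone g)
    (hadj : ∀ a y : L, f a ≤ y ↔ a ≤ g y) (i p : L)
    (n : ℕ) (hn : 2 ≤ n) (x : ℕ → L)
    (hchain : ∀ j, j + 1 ≤ n - 1 → x j ≤ x (j + 1))
    (hP1 : i ≤ x 1) (hP2 : x (n - 2) ≤ p)
    (hP3 : ∀ j, j ≤ n - 2 → f (x j) ≤ x (j + 1))
    (hconc : ∃ j, j ≤ n - 2 ∧ x (j + 1) ≤ x j) :
    OrderHom.lfp ⟨fun a => f a ⊔ i, fun a b hab => sup_le_sup (hf hab) le_rfl⟩ ≤ p := by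
  obtain ⟨j, hj, hcj⟩ := hconc
  have hmono : ∀ a b : ℕ, a ≤ b → b ≤ n - 1 → x a ≤ x b := by
    intro a b hab hb
    induction b with
    | zero => simpa [Nat.le_zero.mp hab]
    | succ k ih =>
      rcases Nat.lt_or_ge a (k+1) with h | h
      · exact le_trans (ih (Nat.lt_succ_iff.mp h) (le_trans (Nat.le_succ k) hb)) (hchain k hb)
      · have : a = k + 1 := le_antisymm hab h
        simp [this]
  have hjn1 : j ≤ n - 1 := le_trans hj (Nat.sub_le_sub_left (by norm_num) n)
  have hij : i ≤ x j := by
    rcases Nat.eq_zero_or_pos j with h0 | h1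
    · subst h0; exact le_trans hP1 hcj
    · exact le_trans hP1 (hmono 1 j h1 hjn1)
  have hpre : f (x j) ⊔ i ≤ x j := sup_le (le_trans (hP3 j hj) hcj) hij
  have hlfp := OrderHom.lfp_le
    (⟨fun a => f a ⊔ i, fun a b hab => sup_le_sup (hf hab) le_rfl⟩ : L →o L) hpre
  exact le_trans hlfp (le_trans (hmono j (n-2) hj
    (Nat.sub_le_sub_left (by norm_num) n)) hP2)
end

section
/- Let L be a complete lattice with i, p ∈ L and f ⊣ g : L → L, where g preserves arbitrary meets. Suppose y₁, …, y_{n−1} is a finite sequence in L with p ⊑ y_{n−1} and g(y_{j+1}) ⊑ y_j for all j ∈ [1, n−2]. Then g^{n−1−j}(p) ⊑ y_j for all j ∈ [1, n−1]. Consequently, if i ⋢ y₁ then μ(λx. f(x) ⊔ i) ⋢ p. -/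
theorem stmt_15 {L : Type*} [CompleteLattice L] (f g : L → L)
    (hf : Monotone f) (hg : Monotone g)
    (hadj : ∀ a y : L, f a ≤ y ↔ a ≤ g y)
    (hgmeet : ∀ s : Set L, g (sInf s) = sInf (g '' s))
    (i p : L) (n : ℕ) (hn : 2 ≤ n) (y : ℕ → L)
    (hN1 : p ≤ y (n - 1))
    (hN2 : ∀ j, 1 ≤ j → j ≤ n - 2 → g (y (j + 1)) ≤ y j) :
    (∀ j, 1 ≤ j → j ≤ n - 1 → g^[n - 1 - j] p ≤ y j) ∧
      (¬ i ≤ y 1 →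
        ¬ OrderHom.lfp ⟨fun a => f a ⊔ i, fun a b hab => sup_le_sup (hf hab) le_rfl⟩ ≤ p) := by
  have key : ∀ d j, j = n - 1 - d → 1 ≤ j → g^[d] p ≤ y j := by
    intro d
    induction d with
    | zero => intro j hj _; simpa [hj] using hN1
    | succ d ih =>
      intro j hj h1
      have hjn : j + 1 = n - 1 - d := by omega
      have h1' : 1 ≤ j + 1 := by omega
      have ihy : g^[d] p ≤ y (j + 1) := ih (j + 1) hjn h1'
      have hjd : j ≤ n - 2 := by omega
      have step := hN2 j h1 hjd
      calc g^[d + 1] p = g (g^[d] p) := by rw [Function.iterate_succ_apply']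
      _ ≤ g (y (j + 1)) := hg ihy
      _ ≤ y j := step
  have part1 : ∀ j, 1 ≤ j → j ≤ n - 1 → g^[n - 1 - j] p ≤ y j := by
    intro j h1 h2
    exact key (n - 1 - j) j (by omega) h1
  refine ⟨part1, fun hi hle => hi ?_⟩
  set F : L →o L := ⟨fun a => f a ⊔ i, fun a b hab => sup_le_sup (hf hab) le_rfl⟩
  have hfix : f (OrderHom.lfp F) ⊔ i = OrderHom.lfp F := OrderHom.map_lfp F
  have hmu : ∀ k, OrderHom.lfp F ≤ g^[k] p := by
    intro k
    induction k with
    | zero => simpa using hle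
    | succ k ih =>
      have hfmu : f (OrderHom.lfp F) ≤ g^[k] p :=
        le_trans (le_trans le_sup_left hfix.le) ih
      rw [Function.iterate_succ_apply']
      exact (hadj _ _).mp hfmu
  have hi1 : i ≤ g^[n - 1 - 1] p :=
    le_trans (le_trans le_sup_right hfix.le) (hmu (n - 1 - 1))
  exact le_trans hi1 (part1 1 le_rfl (by omega))
end

section
/- Let L be a complete lattice and b : L → L monotone. Suppose c_k, …, c_{n−1} is a Kleene sequence: c_{n−1} ⋢ p and c_{j+1} ⊑ b(c_j) for all j ∈ [k, n−2]. Define Y_j = complement of the upper set {c_j}↑ (i.e., Y_j = {x | c_j ⋢ x}). Then each Y_j is a lower set, p ∈ Y_{n−1}, and b↓_r(Y_{j+1}) ⊆ Y_j for all j ∈ [k, n−2], where b↓_r(X) = {x | b(x) ∈ X}. -/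
theorem stmt_18 {L : Type*} [CompleteLattice L] (b : L → L) (hb : Monotone b)
    (p : L) (n k : ℕ) (c : ℕ → L)
    (hC1 : ¬ c (n - 1) ≤ p)
    (hC2 : ∀ j, k ≤ j → j ≤ n - 2 → c (j + 1) ≤ b (c j)) :
    (∀ j : ℕ, IsLowerSet {x : L | ¬ c j ≤ x}) ∧
      p ∈ {x : L | ¬ c (n - 1) ≤ x} ∧
      ∀ j, k ≤ j → j ≤ n - 2 →
        {x : L | b x ∈ {x' : L | ¬ c (j + 1) ≤ x'}} ⊆ {x : L | ¬ c j ≤ x} := by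
  refine ⟨fun j x y hxy hx h => hx (h.trans hxy), hC1, fun j hk hn x hx h => ?_⟩
  exact hx ((hC2 j hk hn).trans (hb h))
end
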